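/- arXiv:1204.1220 — 2 statements merged into one kernel-verified Lean document; each statement's English description precedes it below -/
import Mathlib

section
/- Let U be a subspace of R^n. If the entrywise square u ∘ u is strictly balanced for every nonzero u ∈ U (i.e., for all i, 2u_i^2 < Σ_j u_j^2), then μ(U) < 1/2 and hence U is realizable. -/
open scoped BigOperators InnerProductSpace

/-- The coherence of a subspace `U` of `ℝⁿ`: `μ(U) = max_i ‖P_U e_i‖²`. -/
noncomputable def coherence {n : ℕ} (U : Submodule ℝ (EuclideanSpace ℝ (Fin n))) : ℝ :=
  ⨆ i : Fin n, ‖(Submodule.orthogonalProjection U (EuclideanSpace.single i 1) : EuclideanSpace ℝ (Fin n))‖^2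

/-- A subspace `U ⊆ ℝⁿ` is realizable if some correlation matrix (PSD with unit diagonal)
has nullspace containing `U`. -/
def Realizable {n : ℕ} (U : Submodule ℝ (EuclideanSpace ℝ (Fin n))) : Prop :=
  ∃ Y : Matrix (Fin n) (Fin n) ℝ, Y.PosSemidef ∧ (∀ i, Y i i = 1) ∧ ∀ u ∈ U, Y.mulVec u = 0

lemma inner_euclidean_eq {n : ℕ} (x y : EuclideanSpace ℝ (Fin n)) :
    ⟪x, y⟫_ℝ = ∑ j, x j * y j := by
  simp [PiLp.inner_apply, RCLike.inner_apply, mul_comm]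

lemma inner_single_euclid {n : ℕ} (x : EuclideanSpace ℝ (Fin n)) (i : Fin n) :
    ⟪x, EuclideanSpace.single i 1⟫_ℝ = x i := by
  rw [inner_euclidean_eq]
  simp [EuclideanSpace.single_apply]

/-- Auxiliary: a symmetric matrix `Q` with `Q i i > 1/2`, rows whose squared sums equal the
diagonal, and kernel containing `U`, yields realizability data. -/
lemma aux_realizable {n : ℕ} (U : Submodule ℝ (EuclideanSpace ℝ (Fin n)))
    (Q : Matrix (Fin n) (Fin n) ℝ)
    (hsym : ∀ i j, Q i j = Q j i)
    (hdiag : ∀ i, 1/2 < Q i i)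
    (hrow : ∀ i, ∑ j, (Q i j)^2 = Q i i)
    (hker : ∀ u ∈ U, Q.mulVec u = 0) :
    Realizable U := by
  classical
  rcases Nat.eq_zero_or_pos n with hn | hn
  · subst hn
    refine ⟨0, Matrix.PosSemidef.zero, fun i => absurd i.2 (by simp), fun u _ => ?_⟩
    simp [Matrix.zero_mulVec]
  have hne : Nonempty (Fin n) := ⟨⟨0, hn⟩⟩
  set B : Matrix (Fin n) (Fin n) ℝ := Matrix.of (fun i j => (Q i j)^2) with hB
  have hBapp : ∀ i j, B i j = (Q i j)^2 := fun i j => rfl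
  have hBnn : ∀ i j, 0 ≤ B i j := fun i j => sq_nonneg _
  have hBdiag : ∀ i, B i i = (Q i i)^2 := fun i => rfl
  have hrowB : ∀ i, ∑ j, B i j = Q i i := hrow
  have herase : ∀ i, ∑ j ∈ Finset.univ.erase i, B i j = Q i i - B i i := by
    intro i
    have := Finset.add_sum_erase Finset.univ (fun j => B i j) (Finset.mem_univ i)
    rw [hrowB i] at this
    linarith
  -- B is injective as a linear map (strict diagonal dominance)
  have hinj : Function.Injective B.mulVecLin := by
    rw [injective_iff_map_eq_zero]
    intro x hx
    by_contra hx0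
    obtain ⟨k, -, hk⟩ := Finset.exists_max_image Finset.univ (fun j => |x j|) ⟨_, Finset.mem_univ (Classical.arbitrary (Fin n))⟩
    have hxk : 0 < |x k| := by
      rcases Function.ne_iff.mp hx0 with ⟨j, hj⟩
      exact lt_of_lt_of_le (abs_pos.mpr hj) (hk j (Finset.mem_univ j))
    have hxk0 : (B.mulVec x) k = 0 := by rw [show B.mulVec x = B.mulVecLin x from rfl, hx]; rfl
    have hsum : ∑ j, B k j * x j = 0 := hxk0
    have hsplit : B k k * x k = -∑ j ∈ Finset.univ.erase k, B k j * x j := by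
      have := Finset.add_sum_erase Finset.univ (fun j => B k j * x j) (Finset.mem_univ k)
      rw [hsum] at this
      beta_reduce at this
      linarith
    have habs : B k k * |x k| ≤ (Q k k - B k k) * |x k| := by
      have h1 : |B k k * x k| = |∑ j ∈ Finset.univ.erase k, B k j * x j| := by
        rw [hsplit, abs_neg]
      have h2 : |∑ j ∈ Finset.univ.erase k, B k j * x j| ≤
          ∑ j ∈ Finset.univ.erase k, B k j * |x k| := by
        refine (Finset.abs_sum_le_sum_abs _ _).trans (Finset.sum_le_sum fun j _ => ?_)
        rw [abs_mul, abs_of_nonneg (hBnn k j)]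
        exact mul_le_mul_of_nonneg_left (hk j (Finset.mem_univ j)) (hBnn k j)
      calc B k k * |x k| = |B k k| * |x k| := by rw [abs_of_nonneg (hBnn k k)]
        _ = |B k k * x k| := (abs_mul _ _).symm
        _ ≤ ∑ j ∈ Finset.univ.erase k, B k j * |x k| := h1 ▸ h2
        _ = (Q k k - B k k) * |x k| := by rw [← Finset.sum_mul, herase k]
    have hq := hdiag k
    rw [hBdiag k] at habs
    nlinarith [mul_pos hxk (mul_pos (show (0:ℝ) < Q k k by linarith)
      (show (0:ℝ) < 2 * Q k k - 1 by linarith))]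
  -- hence surjective: solve B d = 1
  have hsurj : Function.Surjective B.mulVecLin := LinearMap.injective_iff_surjective.mp hinj
  obtain ⟨d, hd⟩ := hsurj (fun _ => 1)
  have hd' : ∀ i, ∑ j, B i j * d j = 1 := by
    intro i
    have : (B.mulVec d) i = (fun _ => (1:ℝ)) i := by
      rw [show B.mulVec d = B.mulVecLin d from rfl, hd]
    simpa [Matrix.mulVec, dotProduct] using this
  -- positivity of d
  obtain ⟨k, -, hkmin⟩ := Finset.exists_min_image Finset.univ d ⟨_, Finset.mem_univ (Classical.arbitrary (Fin n))⟩
  obtain ⟨m, -, hmmax⟩ := Finset.exists_max_image Finset.univ d ⟨_, Finset.mem_univ (Classical.arbitrary (Fin n))⟩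
  have hql : ∀ i, Q i i ≤ 1 := by
    intro i
    have h1 : (Q i i)^2 ≤ ∑ j, (Q i j)^2 :=
      Finset.single_le_sum (fun j _ => sq_nonneg (Q i j)) (Finset.mem_univ i)
    rw [hrow i] at h1
    nlinarith [hdiag i]
  have hdk : 0 < d k := by
    set a := Q k k with hadef
    set b := Q m m with hbdef
    have ha : 1/2 < a := hdiag k
    have hb : 1/2 < b := hdiag m
    have ha1 : a ≤ 1 := hql k
    have hb1 : b ≤ 1 := hql m
    have h1 : 1 ≤ a^2 * d k + (a - a^2) * d m := by
      have hsplit := Finset.add_sum_erase Finset.univ (fun j => B k j * d j) (Finset.mem_univ k)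
      rw [hd' k] at hsplit
      have hle : ∑ j ∈ Finset.univ.erase k, B k j * d j ≤
          ∑ j ∈ Finset.univ.erase k, B k j * d m :=
        Finset.sum_le_sum fun j _ => mul_le_mul_of_nonneg_left (hmmax j (Finset.mem_univ j)) (hBnn k j)
      rw [← Finset.sum_mul, herase k, hBdiag k] at hle
      calc (1:ℝ) = B k k * d k + ∑ j ∈ Finset.univ.erase k, B k j * d j := hsplit.symm
        _ ≤ B k k * d k + (a - a^2) * d m := by rw [hBdiag k]; linarith [hle]
        _ = a^2 * d k + (a - a^2) * d m := by rw [hBdiag k]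
    have h2 : b^2 * d m + (b - b^2) * d k ≤ 1 := by
      have hsplit := Finset.add_sum_erase Finset.univ (fun j => B m j * d j) (Finset.mem_univ m)
      rw [hd' m] at hsplit
      have hge : ∑ j ∈ Finset.univ.erase m, B m j * d k ≤
          ∑ j ∈ Finset.univ.erase m, B m j * d j :=
        Finset.sum_le_sum fun j _ => mul_le_mul_of_nonneg_left (hkmin j (Finset.mem_univ j)) (hBnn m j)
      rw [← Finset.sum_mul, herase m, hBdiag m] at hge
      calc b^2 * d m + (b - b^2) * d k = B m m * d m + (b - b^2) * d k := by rw [hBdiag m]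
        _ ≤ B m m * d m + ∑ j ∈ Finset.univ.erase m, B m j * d j := by linarith [hge]
        _ = 1 := hsplit
    -- the pure inequality argument
    by_contra hdk
    push_neg at hdk
    have ha0 : 0 < a := by linarith
    have hb0 : 0 < b := by linarith
    have ha2 : (0:ℝ) ≤ a - a^2 := by nlinarith
    have hb2 : (0:ℝ) ≤ b^2 := sq_nonneg b
    have hC : 0 < a^2*b^2 - (a-a^2)*(b-b^2) := by nlinarith [mul_pos ha0 hb0]
    have s1 : b^2 * 1 ≤ b^2 * (a^2 * d k + (a - a^2) * d m) := mul_le_mul_of_nonneg_left h1 hb2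
    have s2 : (a - a^2) * (b^2 * d m + (b - b^2) * d k) ≤ (a - a^2) * 1 :=
      mul_le_mul_of_nonneg_left h2 ha2
    have key : b^2 - a + a^2 ≤ d k * (a^2*b^2 - (a-a^2)*(b-b^2)) := by nlinarith
    have hL : 0 < b^2 - a + a^2 := by nlinarith [sq_nonneg (2*a-1)]
    have : d k * (a^2*b^2 - (a-a^2)*(b-b^2)) ≤ 0 := mul_nonpos_of_nonpos_of_nonneg hdk hC.le
    linarith
  have hdpos : ∀ i, 0 ≤ d i := fun i => le_of_lt (lt_of_lt_of_le hdk (hkmin i (Finset.mem_univ i)))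
  -- the correlation matrix
  refine ⟨Q * Matrix.diagonal d * Q, ?_, ?_, ?_⟩
  · have hQH : Q.conjTranspose = Q := by
      ext i j
      simp [Matrix.conjTranspose_apply, hsym i j]
    have hd0 : 0 ≤ d := fun i => hdpos i
    have := (Matrix.PosSemidef.diagonal hd0).mul_mul_conjTranspose_same Q
    rwa [hQH] at this
  · intro i
    have h1 : ∀ x, (Q * Matrix.diagonal d) i x = Q i x * d x := fun x => Matrix.mul_diagonal d Q i x
    have : (Q * Matrix.diagonal d * Q) i i = ∑ j, Q i j * d j * Q j i := by
      rw [Matrix.mul_apply]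
      exact Finset.sum_congr rfl fun x _ => by rw [h1 x]
    rw [this]
    have : ∑ j, Q i j * d j * Q j i = ∑ j, B i j * d j := by
      refine Finset.sum_congr rfl fun j _ => ?_
      rw [hBapp, ← hsym i j]; ring
    rw [this, hd' i]
  · intro u hu
    rw [Matrix.mul_assoc, ← Matrix.mulVec_mulVec, ← Matrix.mulVec_mulVec, hker u hu,
      Matrix.mulVec_zero, Matrix.mulVec_zero]

/-- if `u ∘ u` is strictly balanced for every nonzero `u ∈ U`, then
`μ(U) < 1/2` and hence `U` is realizable. -/
theorem realizable_of_square_strictly_balanced (n : ℕ)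
    (U : Submodule ℝ (EuclideanSpace ℝ (Fin n)))
    (h : ∀ u ∈ U, u ≠ 0 → ∀ i : Fin n, 2 * (u i)^2 < ∑ j : Fin n, (u j)^2) :
    coherence U < 1 / 2 ∧ Realizable U := by
  classical
  set u_ : Fin n → EuclideanSpace ℝ (Fin n) :=
    fun i => (Submodule.orthogonalProjection U (EuclideanSpace.single i 1) : EuclideanSpace ℝ (Fin n)) with hu_
  set f : Fin n → EuclideanSpace ℝ (Fin n) :=
    fun i => EuclideanSpace.single i 1 - u_ i with hf
  have hu_mem : ∀ i, u_ i ∈ U := fun i => Submodule.coe_mem _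
  have hf_perp : ∀ i, f i ∈ Uᗮ := fun i => Submodule.sub_starProjection_mem_orthogonal (K := U) _
  have hui : ∀ i, u_ i i = ‖u_ i‖^2 := by
    intro i
    have h0 : ⟪u_ i, f i⟫_ℝ = 0 :=
      Submodule.inner_right_of_mem_orthogonal (hu_mem i) (hf_perp i)
    have h1 : ⟪u_ i, EuclideanSpace.single i 1⟫_ℝ = ⟪u_ i, u_ i⟫_ℝ + ⟪u_ i, f i⟫_ℝ := by
      rw [← inner_add_right]
      congr 1
      simp [hf]
    rw [inner_single_euclid] at h1
    rw [h1, h0, add_zero, real_inner_self_eq_norm_sq]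
  have hnorm : ∀ i, ‖u_ i‖^2 < 1/2 := by
    intro i
    by_cases hz : u_ i = 0
    · rw [hz]; norm_num
    · have hsum := h (u_ i) (hu_mem i) hz i
      have hsq : ∑ j, (u_ i j)^2 = ‖u_ i‖^2 := by
        rw [← real_inner_self_eq_norm_sq, inner_euclidean_eq]
        exact Finset.sum_congr rfl fun j _ => (sq (u_ i j)).symm ▸ (pow_two (u_ i j))
      rw [hsq, hui i] at hsum
      have hpos : 0 < ‖u_ i‖^2 := pow_pos (norm_pos_iff.mpr hz) 2
      nlinarith
  constructor
  · rcases Nat.eq_zero_or_pos n with hn | hn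
    · subst hn
      rw [coherence, Real.iSup_of_isEmpty]
      norm_num
    · have hne : Nonempty (Fin n) := ⟨⟨0, hn⟩⟩
      obtain ⟨i0, -, hmax⟩ := Finset.exists_max_image Finset.univ (fun i => ‖u_ i‖^2)
        ⟨_, Finset.mem_univ (Classical.arbitrary (Fin n))⟩
      have : coherence U ≤ ‖u_ i0‖^2 := ciSup_le fun i => hmax i (Finset.mem_univ i)
      exact lt_of_le_of_lt this (hnorm i0)
  · set Q : Matrix (Fin n) (Fin n) ℝ := Matrix.of (fun i j => f i j) with hQ
    have hQapp : ∀ i j, Q i j = f i j := fun i j => rfl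
    have hQij : ∀ i j, ⟪f i, f j⟫_ℝ = f i j := by
      intro i j
      have h0 : ⟪f i, u_ j⟫_ℝ = 0 :=
        Submodule.inner_left_of_mem_orthogonal (hu_mem j) (hf_perp i)
      have h1 : ⟪f i, f j⟫_ℝ = ⟪f i, EuclideanSpace.single j 1⟫_ℝ - ⟪f i, u_ j⟫_ℝ := by
        rw [← inner_sub_right]
      rw [h1, h0, sub_zero, inner_single_euclid]
    have hsym : ∀ i j, Q i j = Q j i := by
      intro i j
      rw [hQapp, hQapp]
      calc f i j = ⟪f i, f j⟫_ℝ := (hQij i j).symm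
        _ = ⟪f j, f i⟫_ℝ := real_inner_comm _ _
        _ = f j i := hQij j i
    have hsingle : ∀ i : Fin n, (EuclideanSpace.single i (1:ℝ)) i = 1 := by
      intro i
      simp [EuclideanSpace.single_apply]
    have hfii : ∀ i, f i i = 1 - ‖u_ i‖^2 := by
      intro i
      have : f i i = (EuclideanSpace.single i (1:ℝ)) i - u_ i i := rfl
      rw [this, hsingle i, hui i]
    have hdiag : ∀ i, 1/2 < Q i i := by
      intro i
      rw [hQapp, hfii i]
      linarith [hnorm i]
    have hrow : ∀ i, ∑ j, (Q i j)^2 = Q i i := by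
      intro i
      have h1 : ∑ j, (Q i j)^2 = ⟪f i, f i⟫_ℝ := by
        rw [inner_euclidean_eq]
        exact Finset.sum_congr rfl fun j _ => by rw [hQapp]; ring
      rw [h1, hQij i i, hQapp]
    have hker : ∀ u ∈ U, Q.mulVec u = 0 := by
      intro u hu
      funext i
      have h1 : Q.mulVec u i = ∑ j, f i j * u j := by
        simp [Matrix.mulVec, dotProduct, hQapp]
      have h2 : (⟪f i, u⟫_ℝ) = 0 :=
        Submodule.inner_left_of_mem_orthogonal hu (hf_perp i)
      rw [inner_euclidean_eq] at h2
      rw [h1, h2]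
      rfl
    exact aux_realizable U Q hsym hdiag hrow hker
end

section
/- Let P be a partition of {1,...,n} and U a subspace of R^n. If the P-coherence μ_P(U) = max_{I∈P} max_{x ∈ S^I} ||P_U x||^2 satisfies μ_P(U) < 1/2, then U is P-realizable. Moreover μ(U) ≤ μ_P(U) always holds. -/
open Matrix BigOperators

/-- The `𝒫`-coherence of a subspace `U` of `ℝⁿ` (blocks are the fibers of
`π : Fin n → Fin m`): `μ_𝒫(U) = max_{I ∈ 𝒫} max_{x ∈ S^I} ‖P_U x‖²`, where `S^I` is
the set of unit vectors supported on `I`. -/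
noncomputable def pCoherence {n m : ℕ} (π : Fin n → Fin m)
    (U : Submodule ℝ (EuclideanSpace ℝ (Fin n))) : ℝ :=
  ⨆ b : Fin m,
    ⨆ x : {x : EuclideanSpace ℝ (Fin n) // ‖x‖ = 1 ∧ ∀ j, π j ≠ b → x j = 0},
      ‖(Submodule.orthogonalProjection U (x : EuclideanSpace ℝ (Fin n)) : EuclideanSpace ℝ (Fin n))‖^2

namespace PRproof

variable {n m : ℕ}

/-- sum of squares -/
def sq (x : Fin n → ℝ) : ℝ := ∑ i, x i * x i

/-- quadratic form -/
def qf (M : Matrix (Fin n) (Fin n) ℝ) (x : Fin n → ℝ) : ℝ := x ⬝ᵥ M.mulVec x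

/-- restriction to a block -/
def restr (π : Fin n → Fin m) (b : Fin m) (x : Fin n → ℝ) : Fin n → ℝ :=
  fun j => if π j = b then x j else 0

/-- block pinching -/
def Dd (π : Fin n → Fin m) (M : Matrix (Fin n) (Fin n) ℝ) : Matrix (Fin n) (Fin n) ℝ :=
  fun i j => if π i = π j then M i j else 0

/-- identity coercion to Euclidean space -/
def toE {n : ℕ} (x : Fin n → ℝ) : EuclideanSpace ℝ (Fin n) := WithLp.toLp 2 x

lemma sq_nonneg' (x : Fin n → ℝ) : 0 ≤ sq x :=
  Finset.sum_nonneg fun i _ => mul_self_nonneg _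

lemma sq_eq_norm (x : EuclideanSpace ℝ (Fin n)) : sq x = ‖x‖ ^ 2 := by
  rw [← real_inner_self_eq_norm_sq, PiLp.inner_apply]
  rfl

lemma sq_eq_norm' (x : Fin n → ℝ) : sq x = ‖toE x‖ ^ 2 := sq_eq_norm (toE x)

lemma sum_sq_restr (π : Fin n → Fin m) (x : Fin n → ℝ) :
    ∑ b, sq (restr π b x) = sq x := by
  unfold sq restr
  rw [Finset.sum_comm]
  refine Finset.sum_congr rfl fun j _ => ?_
  rw [Finset.sum_eq_single (π j)]
  · simp
  · intro b _ hb
    rw [if_neg fun h => hb h.symm, mul_zero]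
  · simp

lemma qf_Dd (π : Fin n → Fin m) (M : Matrix (Fin n) (Fin n) ℝ) (x : Fin n → ℝ) :
    qf (Dd π M) x = ∑ b, qf M (restr π b x) := by
  unfold qf Dd restr Matrix.mulVec dotProduct
  simp only [Finset.mul_sum, Finset.sum_mul]
  rw [Finset.sum_comm (γ := Fin m)]
  refine Finset.sum_congr rfl fun i _ => ?_
  rw [Finset.sum_comm (γ := Fin m)]
  refine Finset.sum_congr rfl fun j _ => ?_
  rw [Finset.sum_eq_single (π j)]
  · by_cases h : π i = π j <;> simp [h]
  · intro b _ hb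
    by_cases h : π i = b <;> by_cases h' : π j = b <;> simp_all
  · simp


lemma sum_apply' {ι : Type} (s : Finset ι) (f : ι → EuclideanSpace ℝ (Fin n)) (k : Fin n) :
    (∑ j ∈ s, f j) k = ∑ j ∈ s, f j k := by
  classical
  refine Finset.induction_on s ?_ ?_
  · rfl
  · intro a t ha ih
    rw [Finset.sum_insert ha, Finset.sum_insert ha, ← ih]
    rfl

lemma inner_single (y : EuclideanSpace ℝ (Fin n)) (i : Fin n) :
    inner (𝕜 := ℝ) y (EuclideanSpace.single i (1:ℝ)) = y i := by
  rw [PiLp.inner_apply]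
  simp [EuclideanSpace.single_apply, RCLike.inner_apply, starRingEnd_apply, mul_ite,
    Finset.sum_ite_eq]

lemma dot_eq_inner (x y : EuclideanSpace ℝ (Fin n)) :
    (x : Fin n → ℝ) ⬝ᵥ (y : Fin n → ℝ) = inner (𝕜 := ℝ) x y := by
  rw [PiLp.inner_apply]; simp [dotProduct, RCLike.inner_apply, mul_comm]

section Proj
variable (U : Submodule ℝ (EuclideanSpace ℝ (Fin n)))

/-- projection as a plain function on `Fin n → ℝ` -/
noncomputable def proj (x : Fin n → ℝ) : Fin n → ℝ :=
  (Submodule.orthogonalProjection U (toE x) : EuclideanSpace ℝ (Fin n))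

/-- the matrix of the orthogonal projection -/
noncomputable def Pm : Matrix (Fin n) (Fin n) ℝ :=
  fun i j => proj U (EuclideanSpace.single j 1) i

lemma decomp (x : Fin n → ℝ) :
    toE x = ∑ j, x j • (EuclideanSpace.single j (1:ℝ)) := by
  refine PiLp.ext fun k => ?_
  rw [sum_apply']
  simp [EuclideanSpace.single_apply, mul_ite, Finset.sum_ite_eq]
  rfl

lemma mulVec_Pm (x : Fin n → ℝ) : (Pm U).mulVec x = proj U x := by
  funext i
  have h1 : Submodule.orthogonalProjection U (toE x)
      = ∑ j, x j • Submodule.orthogonalProjection U (EuclideanSpace.single j (1:ℝ)) := by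
    conv_lhs => rw [decomp x]
    rw [map_sum]
    exact Finset.sum_congr rfl fun j _ => (Submodule.orthogonalProjection U).map_smul (x j) _
  have h2 : toE (proj U x)
      = ∑ j, x j • toE (proj U (EuclideanSpace.single j (1:ℝ))) := by
    unfold proj
    rw [h1]
    push_cast
    rfl
  have h3 : proj U x i = ∑ j, x j * proj U (EuclideanSpace.single j (1:ℝ)) i := by
    have : proj U x i = (toE (proj U x)) i := rfl
    rw [this, h2, sum_apply' (f := fun j => x j • toE (proj U (EuclideanSpace.single j (1:ℝ))))]
    rfl
  rw [h3]
  simp [Pm, Matrix.mulVec, dotProduct, mul_comm]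

lemma proj_mem (x : Fin n → ℝ) : toE (proj U x) ∈ U :=
  (Submodule.orthogonalProjection U (toE x)).2

lemma qf_Pm (x : Fin n → ℝ) : qf (Pm U) x = sq (proj U x) := by
  have h := Submodule.sub_starProjection_mem_orthogonal (K := U) (toE x)
  have h2 : inner (𝕜 := ℝ) (toE (proj U x)) (toE x - toE (proj U x)) = 0 :=
    (Submodule.mem_orthogonal U _).mp h _ (proj_mem U x)
  rw [inner_sub_right] at h2
  have h3 : qf (Pm U) x = inner (𝕜 := ℝ) (toE (proj U x)) (toE x) := by
    rw [qf, mulVec_Pm]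
    exact (dot_eq_inner (toE x) (toE (proj U x))).trans (real_inner_comm _ _)
  have h5 : sq (proj U x) = inner (𝕜 := ℝ) (toE (proj U x)) (toE (proj U x)) :=
    (sq_eq_norm (toE (proj U x))).trans (real_inner_self_eq_norm_sq _).symm
  rw [h3, h5]
  linarith [h2]

lemma Pm_apply_eq_inner (i j : Fin n) :
    Pm U i j = inner (𝕜 := ℝ) (toE (proj U (EuclideanSpace.single j (1:ℝ))))
      (EuclideanSpace.single i (1:ℝ)) := by
  rw [inner_single]; rfl

lemma Pm_symm : (Pm U)ᵀ = Pm U := by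
  funext i j
  rw [Matrix.transpose_apply, Pm_apply_eq_inner, Pm_apply_eq_inner]
  exact (Submodule.inner_starProjection_left_eq_right U _ _).trans (real_inner_comm _ _)

lemma proj_proj (x : Fin n → ℝ) : proj U (proj U x) = proj U x := by
  unfold proj
  exact congrArg (fun v : U => ((v : EuclideanSpace ℝ (Fin n)) : Fin n → ℝ))
    (Submodule.orthogonalProjectionOnto_mem_subspace_eq_self (K := U) (Submodule.orthogonalProjection U (toE x)))

lemma Pm_idem : Pm U * Pm U = Pm U := by
  funext i j
  have h1 : (Pm U * Pm U) i j = ((Pm U).mulVec (fun k => Pm U k j)) i := by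
    simp [Matrix.mul_apply, Matrix.mulVec, dotProduct]
  have h2 : (fun k => Pm U k j) = proj U (EuclideanSpace.single j (1:ℝ)) := rfl
  rw [h1, h2, mulVec_Pm, proj_proj]
  rfl

lemma proj_self {u : EuclideanSpace ℝ (Fin n)} (hu : u ∈ U) : proj U u = u := by
  unfold proj
  have h : Submodule.orthogonalProjection U (toE u) = ⟨u, hu⟩ := by
    ext1
    exact Submodule.starProjection_eq_self_iff.mpr hu
  rw [h]

end Proj
section Coh
variable (π : Fin n → Fin m) (U : Submodule ℝ (EuclideanSpace ℝ (Fin n)))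

lemma norm_proj_le (x : EuclideanSpace ℝ (Fin n)) :
    ‖(Submodule.orthogonalProjection U x : EuclideanSpace ℝ (Fin n))‖ ≤ ‖x‖ := by
  calc ‖(Submodule.orthogonalProjection U x : EuclideanSpace ℝ (Fin n))‖
      ≤ ‖Submodule.orthogonalProjection U‖ * ‖x‖ := (Submodule.orthogonalProjection U).le_opNorm x
    _ ≤ 1 * ‖x‖ := by
        have := Submodule.orthogonalProjectionOnto_norm_le U
        have h0 : (0:ℝ) ≤ ‖x‖ := norm_nonneg x
        nlinarith
    _ = ‖x‖ := one_mul _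

/-- the inner supremum of `pCoherence` -/
noncomputable def innerSup (b : Fin m) : ℝ :=
  ⨆ x : {x : EuclideanSpace ℝ (Fin n) // ‖x‖ = 1 ∧ ∀ j, π j ≠ b → x j = 0},
      ‖(Submodule.orthogonalProjection U (x : EuclideanSpace ℝ (Fin n)) : EuclideanSpace ℝ (Fin n))‖^2

lemma pCoherence_eq : pCoherence π U = ⨆ b, innerSup π U b := rfl

lemma innerSup_bddAbove (b : Fin m) : BddAbove (Set.range
    (fun x : {x : EuclideanSpace ℝ (Fin n) // ‖x‖ = 1 ∧ ∀ j, π j ≠ b → x j = 0} =>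
      ‖(Submodule.orthogonalProjection U (x : EuclideanSpace ℝ (Fin n)) : EuclideanSpace ℝ (Fin n))‖^2)) := by
  refine ⟨1, fun y hy => ?_⟩
  obtain ⟨⟨x, hx1, _⟩, rfl⟩ := hy
  have h := norm_proj_le U x
  rw [hx1] at h
  have h0 : (0:ℝ) ≤ ‖(Submodule.orthogonalProjection U x : EuclideanSpace ℝ (Fin n))‖ := norm_nonneg _
  show ‖(Submodule.orthogonalProjection U x : EuclideanSpace ℝ (Fin n))‖^2 ≤ 1
  nlinarith

lemma le_innerSup (b : Fin m) (x : EuclideanSpace ℝ (Fin n)) (hx : ‖x‖ = 1)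
    (hs : ∀ j, π j ≠ b → x j = 0) :
    ‖(Submodule.orthogonalProjection U x : EuclideanSpace ℝ (Fin n))‖^2 ≤ innerSup π U b :=
  le_ciSup (innerSup_bddAbove π U b) (⟨x, hx, hs⟩ :
    {x : EuclideanSpace ℝ (Fin n) // ‖x‖ = 1 ∧ ∀ j, π j ≠ b → x j = 0})

lemma innerSup_le_pCoherence (b : Fin m) : innerSup π U b ≤ pCoherence π U := by
  rw [pCoherence_eq]
  exact le_ciSup (Set.Finite.bddAbove (Set.finite_range _)) b

lemma pCoherence_nonneg : 0 ≤ pCoherence π U := by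
  rw [pCoherence_eq]
  refine Real.iSup_nonneg fun b => ?_
  exact Real.iSup_nonneg fun x => sq_nonneg _

lemma coherence_le_pCoherence : coherence U ≤ pCoherence π U := by
  rcases Nat.eq_zero_or_pos n with hn | hn
  · subst hn
    have : coherence U = 0 := by
      rw [coherence, iSup_of_empty', Real.sSup_empty]
    rw [this]
    exact pCoherence_nonneg π U
  · have : Nonempty (Fin n) := ⟨⟨0, hn⟩⟩
    rw [coherence]
    refine ciSup_le fun i => ?_
    refine le_trans ?_ (innerSup_le_pCoherence π U (π i))
    refine le_innerSup π U (π i) _ ?_ ?_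
    · simpa using EuclideanSpace.norm_single i (1:ℝ)
    · intro j hj
      have hne : j ≠ i := fun h => hj (by rw [h])
      simp [EuclideanSpace.single_apply, hne]

/-- main coherence estimate in quadratic-form terms -/
lemma qf_Pm_restr_le (b : Fin m) (x : Fin n → ℝ) :
    qf (Pm U) (restr π b x) ≤ pCoherence π U * sq (restr π b x) := by
  set w := restr π b x with hw
  by_cases h0 : toE w = 0
  · have hw0 : w = 0 := congrArg WithLp.ofLp h0
    rw [qf_Pm, hw0]
    have : proj U (0 : Fin n → ℝ) = 0 := by
      unfold proj
      have : toE 0 = (0 : EuclideanSpace ℝ (Fin n)) := rfl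
      rw [this, map_zero]
      rfl
    rw [this]
    simp [sq]
  · have hr : (0:ℝ) < ‖toE w‖ := norm_pos_iff.mpr h0
    set r : ℝ := ‖toE w‖ with hrdef
    set u : EuclideanSpace ℝ (Fin n) := r⁻¹ • toE w with hu
    have hu1 : ‖u‖ = 1 := by
      rw [hu, norm_smul, norm_inv, norm_norm, ← hrdef]
      field_simp
    have hus : ∀ j, π j ≠ b → u j = 0 := by
      intro j hj
      have : w j = 0 := by rw [hw]; unfold restr; simp [hj]
      have huj : u j = r⁻¹ * w j := rfl
      rw [huj, this, mul_zero]
    have key := le_innerSup π U b u hu1 hus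
    have hproj : (proj U w : Fin n → ℝ) = r • (Submodule.orthogonalProjection U u : EuclideanSpace ℝ (Fin n)) := by
      unfold proj
      have : toE w = r • u := by
        rw [hu, smul_smul]
        field_simp
        rw [one_smul]
      rw [this, (Submodule.orthogonalProjection U).map_smul r u]
      rfl
    have hsq : sq (proj U w) = r^2 * ‖(Submodule.orthogonalProjection U u : EuclideanSpace ℝ (Fin n))‖^2 := by
      rw [sq_eq_norm']
      have h6 : toE (proj U w) = r • (Submodule.orthogonalProjection U u : EuclideanSpace ℝ (Fin n)) := congrArg toE hproj
      rw [h6, norm_smul, mul_pow]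
      congr 1
      rw [Real.norm_eq_abs, sq_abs]
    have hsqw : sq w = r^2 := by
      rw [sq_eq_norm', ← hrdef]
    rw [qf_Pm, hsq, hsqw]
    have h2 : r^2 * ‖(Submodule.orthogonalProjection U u : EuclideanSpace ℝ (Fin n))‖^2 ≤ r^2 * innerSup π U b := by
      apply mul_le_mul_of_nonneg_left key (sq_nonneg r)
    refine h2.trans ?_
    rw [mul_comm (pCoherence π U) (r^2)]
    exact mul_le_mul_of_nonneg_left (innerSup_le_pCoherence π U b) (sq_nonneg r)

lemma sq_proj_le (x : Fin n → ℝ) : sq (proj U x) ≤ sq x := by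
  rw [sq_eq_norm' (proj U x), sq_eq_norm' x]
  have h := norm_proj_le U (toE x)
  have h0 : (0:ℝ) ≤ ‖toE (proj U x)‖ := norm_nonneg _
  have h1 : ‖toE (proj U x)‖ = ‖(Submodule.orthogonalProjection U (toE x) : EuclideanSpace ℝ (Fin n))‖ := rfl
  nlinarith

end Coh
section Alg
variable (π : Fin n → Fin m)

lemma bd_apply_ne {S : Matrix (Fin n) (Fin n) ℝ} (hS : Dd π S = S) {k j : Fin n}
    (h : π k ≠ π j) : S k j = 0 := by
  rw [← hS]; simp [Dd, h]

lemma Dd_Dd (A : Matrix (Fin n) (Fin n) ℝ) : Dd π (Dd π A) = Dd π A := by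
  funext i j
  by_cases h : π i = π j <;> simp [Dd, h]

lemma Dd_one : Dd π (1 : Matrix (Fin n) (Fin n) ℝ) = 1 := by
  funext i j
  show (if π i = π j then (1 : Matrix (Fin n) (Fin n) ℝ) i j else 0) = (1 : Matrix (Fin n) (Fin n) ℝ) i j
  by_cases h : i = j
  · subst h
    rw [if_pos rfl]
  · rw [Matrix.one_apply_ne h]
    by_cases h2 : π i = π j
    · rw [if_pos h2]
    · rw [if_neg h2]

lemma Dd_add (A B : Matrix (Fin n) (Fin n) ℝ) : Dd π (A + B) = Dd π A + Dd π B := by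
  funext i j
  by_cases h : π i = π j <;> simp [Dd, h]

lemma Dd_sub (A B : Matrix (Fin n) (Fin n) ℝ) : Dd π (A - B) = Dd π A - Dd π B := by
  funext i j
  by_cases h : π i = π j <;> simp [Dd, h]

lemma Dd_smul (c : ℝ) (A : Matrix (Fin n) (Fin n) ℝ) : Dd π (c • A) = c • Dd π A := by
  funext i j
  by_cases h : π i = π j <;> simp [Dd, h]

lemma Dd_transpose (A : Matrix (Fin n) (Fin n) ℝ) : (Dd π A)ᵀ = Dd π Aᵀ := by
  funext i j
  show (if π j = π i then A j i else 0) = (if π i = π j then Aᵀ i j else 0)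
  by_cases h : π i = π j
  · rw [if_pos h, if_pos h.symm, Matrix.transpose_apply]
  · rw [if_neg h, if_neg (fun hh : π j = π i => h hh.symm)]

lemma Dd_mul_left {S : Matrix (Fin n) (Fin n) ℝ} (hS : Dd π S = S)
    (M : Matrix (Fin n) (Fin n) ℝ) : Dd π (M * S) = Dd π M * S := by
  funext i j
  show (if π i = π j then (M * S) i j else 0) = (Dd π M * S) i j
  rw [Matrix.mul_apply (M := Dd π M)]
  by_cases h : π i = π j
  · rw [if_pos h, Matrix.mul_apply]
    refine Finset.sum_congr rfl fun k _ => ?_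
    show M i k * S k j = (if π i = π k then M i k else 0) * S k j
    by_cases hk : π i = π k
    · rw [if_pos hk]
    · rw [if_neg hk, zero_mul,
        bd_apply_ne π hS (fun hh : π k = π j => hk (h.trans hh.symm)), mul_zero]
  · rw [if_neg h]
    symm
    refine Finset.sum_eq_zero fun k _ => ?_
    show (if π i = π k then M i k else 0) * S k j = 0
    by_cases hk : π i = π k
    · rw [if_pos hk, bd_apply_ne π hS (fun hh : π k = π j => h (hk.trans hh)), mul_zero]
    · rw [if_neg hk, zero_mul]

lemma Dd_mul_right {S : Matrix (Fin n) (Fin n) ℝ} (hS : Dd π S = S)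
    (M : Matrix (Fin n) (Fin n) ℝ) : Dd π (S * M) = S * Dd π M := by
  funext i j
  show (if π i = π j then (S * M) i j else 0) = (S * Dd π M) i j
  rw [Matrix.mul_apply (M := S) (N := Dd π M)]
  by_cases h : π i = π j
  · rw [if_pos h, Matrix.mul_apply]
    refine Finset.sum_congr rfl fun k _ => ?_
    show S i k * M k j = S i k * (if π k = π j then M k j else 0)
    by_cases hk : π k = π j
    · rw [if_pos hk]
    · rw [if_neg hk, mul_zero,
        bd_apply_ne π hS (fun hh : π i = π k => hk (hh.symm.trans h)), zero_mul]
  · rw [if_neg h]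
    symm
    refine Finset.sum_eq_zero fun k _ => ?_
    show S i k * (if π k = π j then M k j else 0) = 0
    by_cases hk : π k = π j
    · rw [if_pos hk, bd_apply_ne π hS (fun hh : π i = π k => h (hh.trans hk)), zero_mul]
    · rw [if_neg hk, mul_zero]

lemma Dd_mul_bd {A B : Matrix (Fin n) (Fin n) ℝ} (hA : Dd π A = A) (hB : Dd π B = B) :
    Dd π (A * B) = A * B := by
  rw [Dd_mul_left π hB, hA]

lemma Dd_inv {A : Matrix (Fin n) (Fin n) ℝ} (hA : Dd π A = A) (h : IsUnit A.det) :
    Dd π A⁻¹ = A⁻¹ := by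
  have h1 : A * A⁻¹ = 1 := Matrix.mul_nonsing_inv A h
  have h2 : A * Dd π A⁻¹ = 1 := by
    funext i j
    by_cases hij : π i = π j
    · have e : (A * Dd π A⁻¹) i j = (A * A⁻¹) i j := by
        rw [Matrix.mul_apply, Matrix.mul_apply]
        refine Finset.sum_congr rfl fun k _ => ?_
        show A i k * (if π k = π j then A⁻¹ k j else 0) = A i k * A⁻¹ k j
        by_cases hk : π k = π j
        · rw [if_pos hk]
        · rw [if_neg hk, mul_zero,
            bd_apply_ne π hA (fun hh : π i = π k => hk (hh.symm.trans hij)), zero_mul]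
      rw [e, h1]
    · have hij' : i ≠ j := fun hh => hij (by rw [hh])
      have e : (A * Dd π A⁻¹) i j = 0 := by
        rw [Matrix.mul_apply]
        refine Finset.sum_eq_zero fun k _ => ?_
        show A i k * (if π k = π j then A⁻¹ k j else 0) = 0
        by_cases hk : π k = π j
        · rw [bd_apply_ne π hA (fun hh : π i = π k => hij (hh.trans hk)), zero_mul]
        · rw [if_neg hk, mul_zero]
      rw [e, Matrix.one_apply_ne hij']
  have h3 := Matrix.inv_eq_right_inv h2
  rw [← h3]

lemma qf_add (A B : Matrix (Fin n) (Fin n) ℝ) (x : Fin n → ℝ) :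
    qf (A + B) x = qf A x + qf B x := by
  unfold qf
  rw [Matrix.add_mulVec, dotProduct_add]

lemma qf_sub (A B : Matrix (Fin n) (Fin n) ℝ) (x : Fin n → ℝ) :
    qf (A - B) x = qf A x - qf B x := by
  unfold qf
  rw [Matrix.sub_mulVec, dotProduct_sub]

lemma qf_one (x : Fin n → ℝ) : qf (1 : Matrix (Fin n) (Fin n) ℝ) x = sq x := by
  unfold qf sq
  rw [Matrix.one_mulVec]
  rfl

lemma sq_eq_dot (x : Fin n → ℝ) : sq x = x ⬝ᵥ x := rfl

lemma qf_conj {A : Matrix (Fin n) (Fin n) ℝ} (hA : Aᵀ = A)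
    (S : Matrix (Fin n) (Fin n) ℝ) (x : Fin n → ℝ) :
    qf (A * S * A) x = qf S (A.mulVec x) := by
  unfold qf
  have h1 : (A * S * A) *ᵥ x = A *ᵥ (S *ᵥ (A *ᵥ x)) := by
    rw [← Matrix.mulVec_mulVec, ← Matrix.mulVec_mulVec]
  rw [h1, dotProduct_mulVec, ← Matrix.mulVec_transpose, hA]

lemma sq_mulVec_eq_qf {A : Matrix (Fin n) (Fin n) ℝ} (hA : Aᵀ = A) (hA2 : A * A = A)
    (x : Fin n → ℝ) : sq (A.mulVec x) = qf A x := by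
  have := qf_conj hA 1 x
  rw [mul_one] at this
  rw [← qf_one (A.mulVec x), ← this, hA2]

end Alg
section Core
variable (π : Fin n → Fin m) (U : Submodule ℝ (EuclideanSpace ℝ (Fin n)))

/-- block-diagonal part of the projection matrix -/
noncomputable def Dm : Matrix (Fin n) (Fin n) ℝ := Dd π (Pm U)

/-- `E = 1 - D` -/
noncomputable def Em : Matrix (Fin n) (Fin n) ℝ := 1 - Dm π U

/-- the coupling operator `𝒦` -/
noncomputable def Kk (S : Matrix (Fin n) (Fin n) ℝ) : Matrix (Fin n) (Fin n) ℝ :=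
  Dd π (Pm U * S * Pm U) - Dm π U * S * Dm π U

lemma Dm_bd : Dd π (Dm π U) = Dm π U := Dd_Dd π _

lemma Dm_symm : (Dm π U)ᵀ = Dm π U := by
  rw [Dm, Dd_transpose, Pm_symm]

lemma qf_Dm (x : Fin n → ℝ) : qf (Dm π U) x = ∑ b, qf (Pm U) (restr π b x) :=
  qf_Dd π _ x

lemma qf_Pm_nonneg (z : Fin n → ℝ) : 0 ≤ qf (Pm U) z := by
  rw [qf_Pm]; exact sq_nonneg' _

lemma qf_Dm_nonneg (x : Fin n → ℝ) : 0 ≤ qf (Dm π U) x := by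
  rw [qf_Dm]
  exact Finset.sum_nonneg fun b _ => qf_Pm_nonneg U _

lemma qf_Dm_le (x : Fin n → ℝ) : qf (Dm π U) x ≤ pCoherence π U * sq x := by
  rw [qf_Dm, ← sum_sq_restr π x, Finset.mul_sum]
  exact Finset.sum_le_sum fun b _ => qf_Pm_restr_le π U b x

lemma Em_symm : (Em π U)ᵀ = Em π U := by
  rw [Em, Matrix.transpose_sub, Matrix.transpose_one, Dm_symm]

lemma Em_bd : Dd π (Em π U) = Em π U := by
  rw [Em, Dd_sub, Dd_one, Dm_bd]

lemma qf_Em (x : Fin n → ℝ) : qf (Em π U) x = sq x - qf (Dm π U) x := by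
  rw [Em, qf_sub, qf_one]

lemma qf_Em_le (x : Fin n → ℝ) : qf (Em π U) x ≤ sq x := by
  rw [qf_Em]
  have := qf_Dm_nonneg π U x
  linarith

lemma qf_Em_ge (x : Fin n → ℝ) :
    (1 - pCoherence π U) * sq x ≤ qf (Em π U) x := by
  rw [qf_Em]
  have := qf_Dm_le π U x
  have := sq_nonneg' x
  nlinarith

lemma sq_pos_of_ne {x : Fin n → ℝ} (hx : x ≠ 0) : 0 < sq x := by
  have : ∃ i, x i ≠ 0 := by
    by_contra h
    push_neg at h
    exact hx (funext h)
  obtain ⟨i, hi⟩ := this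
  exact Finset.sum_pos' (fun j _ => mul_self_nonneg _)
    ⟨i, Finset.mem_univ i, mul_self_pos.mpr hi⟩

section Inv
variable (hμ : pCoherence π U < 1/2)
include hμ

lemma Em_posdef : (Em π U).PosDef := by
  refine Matrix.PosDef.of_dotProduct_mulVec_pos ?_ ?_
  · exact Em_symm π U
  · intro x hx
    have h1 := qf_Em_ge π U x
    have h2 := sq_pos_of_ne hx
    have : (0:ℝ) < (1 - pCoherence π U) * sq x := by nlinarith
    show (0:ℝ) < star x ⬝ᵥ (Em π U).mulVec x
    have hs : star x = x := by funext i; simp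
    rw [hs]
    calc (0:ℝ) < (1 - pCoherence π U) * sq x := this
      _ ≤ qf (Em π U) x := h1

lemma Em_det : IsUnit (Em π U).det :=
  isUnit_iff_ne_zero.mpr (ne_of_gt (Em_posdef π U hμ).det_pos)

lemma Em_mul_inv : Em π U * (Em π U)⁻¹ = 1 := Matrix.mul_nonsing_inv _ (Em_det π U hμ)

lemma Em_inv_mul : (Em π U)⁻¹ * Em π U = 1 := Matrix.nonsing_inv_mul _ (Em_det π U hμ)

lemma Ei_symm : ((Em π U)⁻¹)ᵀ = (Em π U)⁻¹ := by
  rw [Matrix.transpose_nonsing_inv, Em_symm]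

lemma Ei_bd : Dd π (Em π U)⁻¹ = (Em π U)⁻¹ := Dd_inv π (Em_bd π U) (Em_det π U hμ)

lemma sq_Ei_le (x : Fin n → ℝ) :
    (1 - pCoherence π U)^2 * sq ((Em π U)⁻¹.mulVec x) ≤ sq x := by
  set μ := pCoherence π U with hμdef
  set z := (Em π U)⁻¹.mulVec x with hz
  have hEz : (Em π U).mulVec z = x := by
    rw [hz, Matrix.mulVec_mulVec, Em_mul_inv π U hμ, Matrix.one_mulVec]
  have h1 : (1 - μ) * sq z ≤ qf (Em π U) z := qf_Em_ge π U z
  have h2 : qf (Em π U) z = z ⬝ᵥ x := by rw [qf, hEz]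
  have h3 : (z ⬝ᵥ x)^2 ≤ sq z * sq x := by
    have := Finset.sum_mul_sq_le_sq_mul_sq Finset.univ z x
    have e1 : sq z = ∑ i, z i ^ 2 := by simp [sq, pow_two]
    have e2 : sq x = ∑ i, x i ^ 2 := by simp [sq, pow_two]
    rw [e1, e2]
    exact this
  rcases eq_or_lt_of_le (sq_nonneg' z) with h0 | h0
  · rw [← h0, mul_zero]
    exact sq_nonneg' x
  · have hμ1 : 0 < 1 - μ := by
      have := pCoherence_nonneg π U
      rw [← hμdef] at *
      linarith
    nlinarith [sq_nonneg' x, mul_pos hμ1 h0]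

end Inv

lemma restr_Dm (c : Fin m) (x : Fin n → ℝ) :
    restr π c ((Dm π U).mulVec x) = restr π c ((Pm U).mulVec (restr π c x)) := by
  funext j
  show (if π j = c then ((Dm π U).mulVec x) j else 0)
      = (if π j = c then ((Pm U).mulVec (restr π c x)) j else 0)
  by_cases h : π j = c
  · rw [if_pos h, if_pos h]
    show ∑ k, Dm π U j k * x k = ∑ k, Pm U j k * restr π c x k
    refine Finset.sum_congr rfl fun k _ => ?_
    show (if π j = π k then Pm U j k else 0) * x k = Pm U j k * (if π k = c then x k else 0)
    by_cases hk : π k = c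
    · rw [if_pos hk, if_pos (h.trans hk.symm)]
    · rw [if_neg (fun hh : π j = π k => hk (hh.symm.trans h)), if_neg hk, zero_mul, mul_zero]
  · rw [if_neg h, if_neg h]

lemma qf_Kk_eq {S : Matrix (Fin n) (Fin n) ℝ} (hS : Dd π S = S) (x : Fin n → ℝ) :
    qf (Kk π U S) x = ∑ b, ∑ c ∈ Finset.univ.erase b,
      qf S (restr π c ((Pm U).mulVec (restr π b x))) := by
  have hy : ∀ w : Fin n → ℝ, qf S w = ∑ c, qf S (restr π c w) := by
    intro w
    conv_lhs => rw [← hS]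
    exact qf_Dd π S w
  have h1 : qf (Dd π (Pm U * S * Pm U)) x
      = ∑ b, ∑ c, qf S (restr π c ((Pm U).mulVec (restr π b x))) := by
    rw [qf_Dd]
    refine Finset.sum_congr rfl fun b _ => ?_
    rw [qf_conj (Pm_symm U) S, hy]
  have h2 : qf (Dm π U * S * Dm π U) x
      = ∑ c, qf S (restr π c ((Pm U).mulVec (restr π c x))) := by
    rw [qf_conj (Dm_symm π U) S, hy]
    exact Finset.sum_congr rfl fun c _ => by rw [restr_Dm]
  rw [Kk, qf_sub, h1, h2, ← Finset.sum_sub_distrib]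
  refine Finset.sum_congr rfl fun b _ => ?_
  have := Finset.sum_erase_add Finset.univ
    (fun c => qf S (restr π c ((Pm U).mulVec (restr π b x)))) (Finset.mem_univ b)
  linarith [this]

lemma qf_Kk_nonneg {S : Matrix (Fin n) (Fin n) ℝ} (hS : Dd π S = S)
    (hSnn : ∀ z, 0 ≤ qf S z) (x : Fin n → ℝ) : 0 ≤ qf (Kk π U S) x := by
  rw [qf_Kk_eq π U hS]
  exact Finset.sum_nonneg fun b _ => Finset.sum_nonneg fun c _ => hSnn _

lemma qf_Kk_le (hμ2 : pCoherence π U ≤ 1/2) {S : Matrix (Fin n) (Fin n) ℝ}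
    (hS : Dd π S = S) {β : ℝ} (hβ : 0 ≤ β) (hSb : ∀ z, qf S z ≤ β * sq z) (x : Fin n → ℝ) :
    qf (Kk π U S) x ≤ β * (pCoherence π U * (1 - pCoherence π U)) * sq x := by
  set μ := pCoherence π U with hμdef
  have hμ0 : 0 ≤ μ := pCoherence_nonneg π U
  rw [qf_Kk_eq π U hS]
  have key : ∀ b, ∑ c ∈ Finset.univ.erase b,
      qf S (restr π c ((Pm U).mulVec (restr π b x)))
      ≤ β * (μ * (1 - μ)) * sq (restr π b x) := by
    intro b
    set y := (Pm U).mulVec (restr π b x) with hy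
    set t := qf (Pm U) (restr π b x) with ht
    set s := sq (restr π b x) with hs
    set R := sq (restr π b y) with hR
    have h1 : ∑ c ∈ Finset.univ.erase b, qf S (restr π c y)
        ≤ β * ∑ c ∈ Finset.univ.erase b, sq (restr π c y) := by
      rw [Finset.mul_sum]
      exact Finset.sum_le_sum fun c _ => hSb _
    have h2 : ∑ c ∈ Finset.univ.erase b, sq (restr π c y) = sq y - R := by
      have := Finset.sum_erase_add Finset.univ (fun c => sq (restr π c y)) (Finset.mem_univ b)
      have h3 := sum_sq_restr π y
      rw [h3] at this
      linarith
    have h3 : sq y = t := by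
      rw [hy, ht, sq_mulVec_eq_qf (Pm_symm U) (Pm_idem U)]
    have h4 : 0 ≤ t := qf_Pm_nonneg U _
    have h5 : t ≤ μ * s := qf_Pm_restr_le π U b x
    have h6 : t^2 ≤ R * s := by
      have e1 : t = ∑ j, restr π b y j * restr π b x j := by
        rw [ht, qf, ← hy]
        show ∑ j, restr π b x j * y j = _
        refine Finset.sum_congr rfl fun j _ => ?_
        show (if π j = b then x j else 0) * y j = (if π j = b then y j else 0) * (if π j = b then x j else 0)
        by_cases h : π j = b
        · rw [if_pos h, if_pos h, mul_comm]
        · rw [if_neg h, if_neg h, zero_mul, zero_mul]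
      have := Finset.sum_mul_sq_le_sq_mul_sq Finset.univ (restr π b y) (restr π b x)
      rw [← e1] at this
      have eR : R = ∑ i, restr π b y i ^ 2 := by simp [hR, sq, pow_two]
      have es : s = ∑ i, restr π b x i ^ 2 := by simp [hs, sq, pow_two]
      rw [eR, es]
      exact this
    have h7 : 0 ≤ R := sq_nonneg' _
    have h8 : 0 ≤ s := sq_nonneg' _
    have keyb : t - R ≤ μ * (1 - μ) * s := by
      rcases eq_or_lt_of_le h8 with h0 | h0
      · have ht0 : t = 0 := le_antisymm (by nlinarith) h4
        rw [ht0, ← h0]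
        linarith
      · have f0 : μ * s ≤ (1 - μ) * s := by nlinarith
        have f1 : 0 ≤ (μ * s - t) * ((1 - μ) * s - t) :=
          mul_nonneg (by linarith) (by linarith)
        nlinarith
    calc ∑ c ∈ Finset.univ.erase b, qf S (restr π c y)
        ≤ β * (sq y - R) := by rw [← h2]; exact h1
      _ = β * (t - R) := by rw [h3]
      _ ≤ β * (μ * (1 - μ) * s) := mul_le_mul_of_nonneg_left keyb hβ
      _ = β * (μ * (1 - μ)) * s := by ring
  calc ∑ b, ∑ c ∈ Finset.univ.erase b, qf S (restr π c ((Pm U).mulVec (restr π b x)))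
      ≤ ∑ b, β * (μ * (1 - μ)) * sq (restr π b x) := Finset.sum_le_sum fun b _ => key b
    _ = β * (μ * (1 - μ)) * ∑ b, sq (restr π b x) := by rw [Finset.mul_sum]
    _ = β * (μ * (1 - μ)) * sq x := by rw [sum_sq_restr]

end Core
section Lin
variable (π : Fin n → Fin m) (U : Submodule ℝ (EuclideanSpace ℝ (Fin n)))

lemma Dd_zero : Dd π (0 : Matrix (Fin n) (Fin n) ℝ) = 0 := by
  funext i j
  by_cases h : π i = π j <;> simp [Dd, h]

lemma Dd_neg (A : Matrix (Fin n) (Fin n) ℝ) : Dd π (-A) = -Dd π A := by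
  funext i j
  by_cases h : π i = π j <;> simp [Dd, h]

lemma qf_neg (A : Matrix (Fin n) (Fin n) ℝ) (x : Fin n → ℝ) : qf (-A) x = -qf A x := by
  unfold qf
  rw [Matrix.neg_mulVec, dotProduct_neg]

lemma Kk_neg (S : Matrix (Fin n) (Fin n) ℝ) : Kk π U (-S) = -Kk π U S := by
  unfold Kk
  rw [Matrix.mul_neg, Matrix.neg_mul, Dd_neg, Matrix.mul_neg, Matrix.neg_mul]
  abel

lemma qf_smul (A : Matrix (Fin n) (Fin n) ℝ) (a : ℝ) (x : Fin n → ℝ) :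
    qf A (a • x) = a * a * qf A x := by
  unfold qf
  rw [Matrix.mulVec_smul, dotProduct_smul, smul_dotProduct]
  simp [smul_eq_mul]
  ring

/-- the subspace of symmetric block-diagonal matrices -/
def V : Submodule ℝ (Matrix (Fin n) (Fin n) ℝ) where
  carrier := {S | Sᵀ = S ∧ Dd π S = S}
  add_mem' := by
    rintro a b ⟨ha1, ha2⟩ ⟨hb1, hb2⟩
    exact ⟨by rw [Matrix.transpose_add, ha1, hb1], by rw [Dd_add, ha2, hb2]⟩
  zero_mem' := ⟨Matrix.transpose_zero, Dd_zero π⟩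
  smul_mem' := by
    rintro c a ⟨ha1, ha2⟩
    exact ⟨by rw [Matrix.transpose_smul, ha1], by rw [Dd_smul, ha2]⟩

lemma one_mem_V : (1 : Matrix (Fin n) (Fin n) ℝ) ∈ V π :=
  ⟨Matrix.transpose_one, Dd_one π⟩

/-- the affine-free part of the fixed point operator -/
noncomputable def Tfun (S : Matrix (Fin n) (Fin n) ℝ) : Matrix (Fin n) (Fin n) ℝ :=
  Em π U * S * Em π U + Kk π U S

lemma Tfun_mem {S : Matrix (Fin n) (Fin n) ℝ} (hS : S ∈ V π) : Tfun π U S ∈ V π := by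
  obtain ⟨h1, h2⟩ := hS
  constructor
  · rw [Tfun, Matrix.transpose_add]
    congr 1
    · rw [Matrix.transpose_mul, Matrix.transpose_mul, Em_symm, h1, mul_assoc]
    · rw [Kk, Matrix.transpose_sub, Dd_transpose]
      congr 1
      · rw [Matrix.transpose_mul, Matrix.transpose_mul, Pm_symm, h1]
        rw [mul_assoc]
      · rw [Matrix.transpose_mul, Matrix.transpose_mul, Dm_symm, h1, mul_assoc]
  · rw [Tfun, Dd_add, Dd_mul_bd π (Dd_mul_bd π (Em_bd π U) h2) (Em_bd π U), Kk, Dd_sub,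
      Dd_Dd, Dd_mul_bd π (Dd_mul_bd π (Dm_bd π U) h2) (Dm_bd π U)]

/-- `T` as a linear endomorphism of `V` -/
noncomputable def Tlin : ↥(V π) →ₗ[ℝ] ↥(V π) where
  toFun S := ⟨Tfun π U S.1, Tfun_mem π U S.2⟩
  map_add' a b := by
    apply Subtype.ext
    show Tfun π U (a.1 + b.1) = Tfun π U a.1 + Tfun π U b.1
    unfold Tfun Kk
    rw [mul_add, add_mul, mul_add, add_mul, mul_add, Dd_add, add_mul]
    abel
  map_smul' c a := by
    apply Subtype.ext
    show Tfun π U (c • a.1) = c • Tfun π U a.1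
    unfold Tfun Kk
    rw [Matrix.mul_smul, Matrix.smul_mul, Matrix.mul_smul, Matrix.smul_mul,
      Matrix.mul_smul, Dd_smul, Matrix.smul_mul]
    rw [smul_add, smul_sub]

lemma exists_max_sphere (hn : 0 < n) (g : EuclideanSpace ℝ (Fin n) → ℝ) (hg : Continuous g) :
    ∃ v : EuclideanSpace ℝ (Fin n), ‖v‖ = 1 ∧
      ∀ x : EuclideanSpace ℝ (Fin n), ‖x‖ = 1 → g x ≤ g v := by
  have hne : (Metric.sphere (0 : EuclideanSpace ℝ (Fin n)) 1).Nonempty := by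
    refine ⟨EuclideanSpace.single ⟨0, hn⟩ 1, ?_⟩
    rw [mem_sphere_zero_iff_norm, EuclideanSpace.norm_single]
    norm_num
  obtain ⟨v, hv, hmax⟩ := (isCompact_sphere (0 : EuclideanSpace ℝ (Fin n)) 1).exists_isMaxOn
    hne hg.continuousOn
  refine ⟨v, mem_sphere_zero_iff_norm.mp hv, fun x hx => ?_⟩
  exact hmax (mem_sphere_zero_iff_norm.mpr hx)

lemma qf_continuous (S : Matrix (Fin n) (Fin n) ℝ) :
    Continuous fun x : EuclideanSpace ℝ (Fin n) => qf S (x : Fin n → ℝ) := by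
  have h : Continuous fun x : Fin n → ℝ => qf S x := by
    unfold qf dotProduct Matrix.mulVec
    refine continuous_finset_sum _ fun i _ => (continuous_apply i).mul ?_
    exact continuous_finset_sum _ fun j _ => continuous_const.mul (continuous_apply j)
  exact h.comp (PiLp.continuous_ofLp 2 (fun _ : Fin n => ℝ))

lemma qf_le_of_sphere {S : Matrix (Fin n) (Fin n) ℝ} {c : ℝ}
    (h : ∀ x : EuclideanSpace ℝ (Fin n), ‖x‖ = 1 → qf S x ≤ c) :
    ∀ x : Fin n → ℝ, qf S x ≤ c * sq x := by
  intro x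
  by_cases hx : toE x = 0
  · have hx0 : x = 0 := congrArg WithLp.ofLp hx
    subst hx0
    have h1 : qf S (0 : Fin n → ℝ) = 0 := by
      unfold qf
      rw [zero_dotProduct]
    have h2 : sq (0 : Fin n → ℝ) = 0 := by simp [sq]
    rw [h1, h2, mul_zero]
  · have hr : (0:ℝ) < ‖toE x‖ := norm_pos_iff.mpr hx
    set r : ℝ := ‖toE x‖ with hrdef
    set u : EuclideanSpace ℝ (Fin n) := r⁻¹ • toE x with hu
    have hu1 : ‖u‖ = 1 := by
      rw [hu, norm_smul, norm_inv, norm_norm, ← hrdef]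
      field_simp
    have hxu : x = r • (u : Fin n → ℝ) := by
      funext k
      show x k = r * (r⁻¹ * x k)
      field_simp
    have := h u hu1
    have h2 : qf S x = r * r * qf S u := by
      rw [hxu, qf_smul]
    have h3 : sq x = r * r * 1 := by
      rw [sq_eq_norm' x, ← hrdef]
      ring
    rw [h2, h3]
    nlinarith [mul_pos hr hr]

end Lin
section Main
variable (π : Fin n → Fin m) (U : Submodule ℝ (EuclideanSpace ℝ (Fin n)))

lemma dot_cross {S : Matrix (Fin n) (Fin n) ℝ} (hsym : Sᵀ = S) (x y : Fin n → ℝ) :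
    x ⬝ᵥ S *ᵥ y = y ⬝ᵥ S *ᵥ x := by
  rw [dotProduct_mulVec, ← Matrix.mulVec_transpose, hsym, dotProduct_comm]

lemma qf_add_vec {S : Matrix (Fin n) (Fin n) ℝ} (hsym : Sᵀ = S) (x y : Fin n → ℝ) :
    qf S (x + y) = qf S x + qf S y + 2 * (x ⬝ᵥ S *ᵥ y) := by
  unfold qf
  rw [Matrix.mulVec_add, dotProduct_add, add_dotProduct, add_dotProduct,
    dot_cross hsym y x]
  ring

lemma dot_basis (S : Matrix (Fin n) (Fin n) ℝ) (i j : Fin n) :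
    (fun k => if k = i then (1:ℝ) else 0) ⬝ᵥ S *ᵥ (fun k => if k = j then (1:ℝ) else 0)
      = S i j := by
  unfold dotProduct Matrix.mulVec
  simp [dotProduct, mul_ite, ite_mul, Finset.sum_ite_eq, Finset.sum_ite_eq']

lemma eq_zero_of_qf_zero {S : Matrix (Fin n) (Fin n) ℝ} (hsym : Sᵀ = S)
    (h : ∀ z, qf S z = 0) : S = 0 := by
  funext i j
  have h1 := h (fun k => if k = i then 1 else 0)
  have h2 := h (fun k => if k = j then 1 else 0)
  have h3 := h ((fun k => if k = i then (1:ℝ) else 0) + fun k => if k = j then (1:ℝ) else 0)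
  rw [qf_add_vec hsym, h1, h2, dot_basis] at h3
  have : S i j = 0 := by linarith
  rw [this]
  rfl

lemma qf_basis (S : Matrix (Fin n) (Fin n) ℝ) (i : Fin n) :
    qf S (fun k => if k = i then (1:ℝ) else 0) = S i i := by
  rw [qf, dot_basis]

set_option maxHeartbeats 1000000 in
lemma Tlin_inj (hn : 0 < n) (hμ : pCoherence π U < 1/2) :
    Function.Injective (Tlin π U) := by
  have key : ∀ Sv : ↥(V π), Tlin π U Sv = 0 → Sv = 0 := by
    intro Sv hTS0
    obtain ⟨hsym, hbd⟩ := Sv.2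
    have hT : Em π U * Sv.1 * Em π U + Kk π U Sv.1 = 0 := congrArg Subtype.val hTS0
    set S := Sv.1 with hSdef
    clear_value S
    set μ := pCoherence π U with hμdef
    have hμ0 : 0 ≤ μ := pCoherence_nonneg π U
    have hμ2 : μ ≤ 1/2 := le_of_lt hμ
    have h1μ : 0 < 1 - μ := by linarith
    obtain ⟨v, hv1, hvmax⟩ := exists_max_sphere hn (fun x => |qf S x|) (qf_continuous S).abs
    set M := |qf S (v : Fin n → ℝ)| with hM
    have hM0 : 0 ≤ M := abs_nonneg _
    have hup : ∀ z, qf S z ≤ M * sq z :=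
      qf_le_of_sphere (fun x hx => (le_abs_self _).trans (hvmax x hx))
    have hdn : ∀ z, qf (-S) z ≤ M * sq z :=
      qf_le_of_sphere (fun x hx => by rw [qf_neg]; exact (neg_le_abs _).trans (hvmax x hx))
    have hbdneg : Dd π (-S) = -S := by rw [Dd_neg, hbd]
    have hkey : ∀ x : Fin n → ℝ, |qf S x| ≤ M * (μ * (1 - μ)) * sq ((Em π U)⁻¹ *ᵥ x) := by
      intro x
      set z := (Em π U)⁻¹ *ᵥ x with hz
      have hESE : qf S x = qf (Em π U * S * Em π U) z := by
        rw [qf_conj (Em_symm π U), hz, Matrix.mulVec_mulVec, Em_mul_inv π U hμ,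
          Matrix.one_mulVec]
      have hESE2 : Em π U * S * Em π U = -(Kk π U S) := eq_neg_of_add_eq_zero_left hT
      have e1 : qf S x = qf (Kk π U (-S)) z := by
        rw [hESE, hESE2, Kk_neg]
      have b1 : qf S x ≤ M * (μ * (1 - μ)) * sq z := by
        rw [e1]; exact qf_Kk_le π U hμ2 hbdneg hM0 hdn z
      have b2 : -qf S x ≤ M * (μ * (1 - μ)) * sq z := by
        have e2 : -qf S x = qf (Kk π U S) z := by rw [e1, Kk_neg, qf_neg, neg_neg]
        rw [e2]; exact qf_Kk_le π U hμ2 hbd hM0 hup z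
      exact abs_le.mpr ⟨by linarith, b1⟩
    have hvsq : sq (v : Fin n → ℝ) = 1 := by
      rw [sq_eq_norm v, hv1, one_pow]
    have h4 := hkey (v : Fin n → ℝ)
    have h5 := sq_Ei_le π U hμ (v : Fin n → ℝ)
    rw [hvsq, ← hμdef] at h5
    set q := sq ((Em π U)⁻¹ *ᵥ (v : Fin n → ℝ)) with hq
    have hq0 : 0 ≤ q := sq_nonneg' _
    have hMle : M ≤ M * (μ * (1 - μ)) * q := by
      rw [hM]; exact h4
    have p1 : M * (1-μ)^2 ≤ (M * (μ * (1-μ)) * q) * (1-μ)^2 :=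
      mul_le_mul_of_nonneg_right hMle (sq_nonneg _)
    have p2 : (M * (μ * (1-μ))) * ((1-μ)^2 * q) ≤ (M * (μ * (1-μ))) * 1 :=
      mul_le_mul_of_nonneg_left h5 (mul_nonneg hM0 (mul_nonneg hμ0 h1μ.le))
    have p3 : M * (1-μ)^2 ≤ M * (μ * (1-μ)) := by nlinarith [p1, p2]
    have h13 : (0:ℝ) < (1-μ) * (1-2*μ) := mul_pos h1μ (by linarith)
    have hMz : M = 0 := le_antisymm (by nlinarith [p3, h13]) hM0
    have hz0 : ∀ z, qf S z = 0 := by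
      intro z
      have a1 := hup z
      have a2 := hdn z
      rw [qf_neg] at a2
      rw [hMz, zero_mul] at a1 a2
      linarith
    apply Subtype.ext
    show Sv.1 = (0 : ↥(V π)).1
    rw [← hSdef]
    exact eq_zero_of_qf_zero hsym hz0
  intro a b hab
  have h1 : Tlin π U (a - b) = 0 := by rw [map_sub, hab, sub_self]
  have h2 := key _ h1
  exact sub_eq_zero.mp h2

set_option maxHeartbeats 1000000 in
lemma exists_good_S (hn : 0 < n) (hμ : pCoherence π U < 1/2) :
    ∃ S : Matrix (Fin n) (Fin n) ℝ, Sᵀ = S ∧ Dd π S = S ∧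
      Em π U * S * Em π U + Kk π U S = 1 ∧ ∀ z, 0 ≤ qf S z := by
  have hinj := Tlin_inj π U hn hμ
  have hsurj := (LinearMap.injective_iff_surjective (f := Tlin π U)).mp hinj
  obtain ⟨Sv, hSv⟩ := hsurj ⟨1, one_mem_V π⟩
  obtain ⟨hsym, hbd⟩ := Sv.2
  have hT : Em π U * Sv.1 * Em π U + Kk π U Sv.1 = 1 := congrArg Subtype.val hSv
  set S := Sv.1 with hSdef
  clear_value S
  set μ := pCoherence π U with hμdef
  have hμ0 : 0 ≤ μ := pCoherence_nonneg π U
  have hμ2 : μ ≤ 1/2 := le_of_lt hμ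
  have h1μ : 0 < 1 - μ := by linarith
  refine ⟨S, hsym, hbd, hT, ?_⟩
  have hid : ∀ x : Fin n → ℝ,
      qf S x = sq ((Em π U)⁻¹ *ᵥ x) - qf (Kk π U S) ((Em π U)⁻¹ *ᵥ x) := by
    intro x
    have hESE : qf S x = qf (Em π U * S * Em π U) ((Em π U)⁻¹ *ᵥ x) := by
      rw [qf_conj (Em_symm π U), Matrix.mulVec_mulVec, Em_mul_inv π U hμ, Matrix.one_mulVec]
    have he : Em π U * S * Em π U = 1 - Kk π U S := eq_sub_of_add_eq hT
    rw [hESE, he, qf_sub, qf_one]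
  obtain ⟨va, hva1, hamax⟩ := exists_max_sphere hn (fun x => -qf S x) (qf_continuous S).neg
  by_cases ha : -qf S (va : Fin n → ℝ) ≤ 0
  · intro z
    have hd : ∀ w, qf (-S) w ≤ (-qf S (va : Fin n → ℝ)) * sq w :=
      qf_le_of_sphere (fun x hx => by rw [qf_neg]; exact hamax x hx)
    have h6 := hd z
    rw [qf_neg] at h6
    have h7 : (-qf S (va : Fin n → ℝ)) * sq z ≤ 0 :=
      mul_nonpos_of_nonpos_of_nonneg ha (sq_nonneg' z)
    linarith
  · exfalso
    push_neg at ha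
    set a := -qf S (va : Fin n → ℝ) with hadef
    have ha0 : 0 < a := ha
    obtain ⟨vc, hvc1, hcmax⟩ := exists_max_sphere hn (fun x => qf S x) (qf_continuous S)
    set c := max (qf S (vc : Fin n → ℝ)) 0 with hcdef
    have hc0 : 0 ≤ c := le_max_right _ _
    have hupS : ∀ z, qf S z ≤ c * sq z :=
      qf_le_of_sphere (fun x hx => (hcmax x hx).trans (le_max_left _ _))
    have hdnS : ∀ z, qf (-S) z ≤ a * sq z :=
      qf_le_of_sphere (fun x hx => by rw [qf_neg]; exact hamax x hx)
    have hbdneg : Dd π (-S) = -S := by rw [Dd_neg, hbd]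
    -- bound at vc
    set zc := (Em π U)⁻¹ *ᵥ (vc : Fin n → ℝ) with hzc
    have hKlow : -(a * (μ * (1-μ)) * sq zc) ≤ qf (Kk π U S) zc := by
      have h8 := qf_Kk_le π U hμ2 hbdneg ha0.le hdnS zc
      rw [Kk_neg, qf_neg] at h8
      linarith
    have hsqc := sq_Ei_le π U hμ (vc : Fin n → ℝ)
    have hvcsq : sq (vc : Fin n → ℝ) = 1 := by rw [sq_eq_norm vc, hvc1, one_pow]
    rw [hvcsq, ← hμdef, ← hzc] at hsqc
    have hvcb : qf S (vc : Fin n → ℝ) ≤ (1 + a * (μ * (1-μ))) * sq zc := by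
      have h9 := hid (vc : Fin n → ℝ)
      rw [← hzc] at h9
      nlinarith [hKlow]
    have hposco : (0:ℝ) ≤ 1 + a * (μ * (1-μ)) := by
      nlinarith [mul_nonneg ha0.le (mul_nonneg hμ0 h1μ.le)]
    have hcb : c * (1-μ)^2 ≤ 1 + a * (μ * (1-μ)) := by
      rcases le_or_gt (qf S (vc : Fin n → ℝ)) 0 with h|h
      · rw [hcdef, max_eq_right h, zero_mul]
        exact hposco
      · rw [hcdef, max_eq_left h.le]
        have p1 : qf S (vc : Fin n → ℝ) * (1-μ)^2 ≤ ((1 + a * (μ * (1-μ))) * sq zc) * (1-μ)^2 :=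
          mul_le_mul_of_nonneg_right hvcb (sq_nonneg _)
        have p2 : (1 + a * (μ * (1-μ))) * ((1-μ)^2 * sq zc) ≤ (1 + a * (μ * (1-μ))) * 1 :=
          mul_le_mul_of_nonneg_left hsqc hposco
        nlinarith [p1, p2]
    -- bound at va
    set za := (Em π U)⁻¹ *ᵥ (va : Fin n → ℝ) with hza
    have hKhigh : qf (Kk π U S) za ≤ c * (μ * (1-μ)) * sq za :=
      qf_Kk_le π U hμ2 hbd hc0 hupS za
    have hsqa := sq_Ei_le π U hμ (va : Fin n → ℝ)
    have hvasq : sq (va : Fin n → ℝ) = 1 := by rw [sq_eq_norm va, hva1, one_pow]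
    rw [hvasq, ← hμdef, ← hza] at hsqa
    have hida := hid (va : Fin n → ℝ)
    rw [← hza] at hida
    have hlow : (1 - c * (μ * (1-μ))) * sq za ≤ -a := by nlinarith [hKhigh]
    rcases le_or_gt 0 (1 - c * (μ * (1-μ))) with h|h
    · nlinarith [sq_nonneg' za, mul_nonneg h (sq_nonneg' za)]
    · have ha2 : a * (1-μ)^2 ≤ c * (μ * (1-μ)) - 1 := by
        nlinarith [sq_nonneg' za, hsqa, hlow]
      nlinarith [mul_le_mul_of_nonneg_right ha2 h1μ.le,
        mul_le_mul_of_nonneg_left hcb hμ0, mul_pos ha0 h1μ, mul_pos (mul_pos ha0 h1μ) h1μ]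

lemma Dm_def : Dm π U = Dd π (Pm U) := rfl

lemma Dd_QSQ {S : Matrix (Fin n) (Fin n) ℝ} (hS : Dd π S = S) :
    Dd π ((1 - Pm U) * S * (1 - Pm U)) = Em π U * S * Em π U + Kk π U S := by
  have e : (1 - Pm U) * S * (1 - Pm U) = S - Pm U * S - S * Pm U + Pm U * S * Pm U := by
    noncomm_ring
  rw [e, Dd_add, Dd_sub, Dd_sub, hS, Dd_mul_left π hS (Pm U), Dd_mul_right π hS (Pm U)]
  have e2 : Em π U * S * Em π U
      = S - Dd π (Pm U) * S - S * Dd π (Pm U) + Dd π (Pm U) * S * Dd π (Pm U) := by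
    rw [Em, Dm_def]
    noncomm_ring
  rw [e2, Kk, Dm_def]
  abel

end Main
end PRproof

open PRproof

/-- `U` is `𝒫`-realizable: some PSD matrix `Y` whose principal submatrices indexed by the
blocks are identity matrices has nullspace containing `U`. -/
def PRealizable {n m : ℕ} (π : Fin n → Fin m) (U : Submodule ℝ (EuclideanSpace ℝ (Fin n))) :
    Prop :=
  ∃ Y : Matrix (Fin n) (Fin n) ℝ, Y.PosSemidef ∧
    (∀ i j, π i = π j → Y i j = if i = j then 1 else 0) ∧ ∀ u ∈ U, Y.mulVec u = 0

/-- `μ(U) ≤ μ_𝒫(U)`, and if `μ_𝒫(U) < 1/2` then `U` is `𝒫`-realizable. -/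
theorem pRealizable_of_pCoherence_lt_half (n m : ℕ) (π : Fin n → Fin m)
    (U : Submodule ℝ (EuclideanSpace ℝ (Fin n))) :
    coherence U ≤ pCoherence π U ∧ (pCoherence π U < 1 / 2 → PRealizable π U) := by
  constructor
  · exact coherence_le_pCoherence π U
  · intro hμ
    have hμ' : pCoherence π U < 1/2 := by linarith
    rcases Nat.eq_zero_or_pos n with hn | hn
    · subst hn
      refine ⟨0, Matrix.PosSemidef.zero, fun i j _ => i.elim0, fun u hu => ?_⟩
      rw [Matrix.zero_mulVec]
    · obtain ⟨S, hsym, hbd, hT, hpsd⟩ := exists_good_S π U hn hμ'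
      refine ⟨(1 - Pm U) * S * (1 - Pm U), ?_, ?_, ?_⟩
      · have hS : S.PosSemidef := Matrix.PosSemidef.of_dotProduct_mulVec_nonneg hsym (fun x => by simpa [qf] using hpsd x)
        have hQT : (1 - Pm U)ᴴ = (1 - Pm U) := by
          show (1 - Pm U)ᵀ = (1 - Pm U)
          rw [Matrix.transpose_sub, Matrix.transpose_one, Pm_symm]
        have h2 := hS.conjTranspose_mul_mul_same (1 - Pm U)
        rw [hQT] at h2
        exact h2
      · intro i j hij
        have hY := Dd_QSQ π U hbd
        rw [hT] at hY
        calc ((1 - Pm U) * S * (1 - Pm U)) i j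
            = Dd π ((1 - Pm U) * S * (1 - Pm U)) i j := by
              show _ = if π i = π j then _ else 0
              rw [if_pos hij]
          _ = (1 : Matrix (Fin n) (Fin n) ℝ) i j := by rw [hY]
          _ = if i = j then 1 else 0 := Matrix.one_apply
      · intro u hu
        have hQu : (1 - Pm U) *ᵥ (u : Fin n → ℝ) = 0 := by
          rw [Matrix.sub_mulVec, Matrix.one_mulVec, mulVec_Pm, proj_self U hu, sub_self]
        have h3 : ((1 - Pm U) * S * (1 - Pm U)) *ᵥ (u : Fin n → ℝ)
            = ((1 - Pm U) * S) *ᵥ ((1 - Pm U) *ᵥ (u : Fin n → ℝ)) :=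
          (Matrix.mulVec_mulVec _ _ _).symm
        rw [h3, hQu, Matrix.mulVec_zero]
end
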